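/- For any N : E → ℤ≥0 and mean-zero functions φ, ψ : V → ℤ, the inequality #{∂r = φ+ψ, ∂b = 0}_N + #{∂r = φ−ψ, ∂b = 0}_N ≥ 2·#{∂r = φ, ∂b = ψ}_N holds, where the sets count two-colored oriented configurations on the multigraph G_N with prescribed red and blue sources. -/

import Mathlib

open Finset

/-- A finite multigraph on vertex set `V`: a finite set of distinguishable
strands (edges), each with an unordered pair of distinct endpoints. -/
structure MG (V : Type) where
  Strand : Type
  [fin : Fintype Strand]
  [dec : DecidableEq Strand]
  ends : Strand → Sym2 V
  noloop : ∀ s, ¬ (ends s).IsDiag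

attribute [instance] MG.fin MG.dec

variable {V : Type} [Fintype V] [DecidableEq V]

/-- An oriented (one-colored) configuration on the multigraph `G`. -/
structure Config (G : MG V) where
  orient : G.Strand → V × V
  compat : ∀ s, Sym2.mk.uncurry (orient s) = G.ends s

/-- A two-colored oriented configuration on the multigraph `G`
(`red s = true` means the strand `s` is red, otherwise it is blue). -/
structure Config2 (G : MG V) where
  orient : G.Strand → V × V
  red : G.Strand → Bool
  compat : ∀ s, Sym2.mk.uncurry (orient s) = G.ends s

/-- The current induced by an oriented configuration. -/
def Config.cur {G : MG V} (ω : Config G) (x y : V) : ℕ :=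
  (univ.filter fun s => ω.orient s = (x, y)).card

/-- The red current of a two-colored configuration. -/
def Config2.redCur {G : MG V} (ω : Config2 G) (x y : V) : ℕ :=
  (univ.filter fun s => ω.orient s = (x, y) ∧ ω.red s = true).card

/-- The blue current of a two-colored configuration. -/
def Config2.blueCur {G : MG V} (ω : Config2 G) (x y : V) : ℕ :=
  (univ.filter fun s => ω.orient s = (x, y) ∧ ω.red s = false).card

/-- The source function of a current. -/
def csrc (n : V → V → ℕ) (x : V) : ℤ :=
  ∑ y, ((n x y : ℤ) - n y x)

/-- The bijection `F`: paint everything red keeping orientations for the first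
component; reverse red strands and paint everything blue for the second. -/
def F {G : MG V} (ω : Config2 G) : Config G × Config G :=
  (⟨ω.orient, ω.compat⟩,
   ⟨fun s => if ω.red s then (ω.orient s).swap else ω.orient s, by
      intro s
      by_cases h : ω.red s <;> simp [h, ← ω.compat s, Function.uncurry, Sym2.eq_swap]⟩)

/-!
The map `F` identifies two-colored configurations with red source `f` and blue source `g`
with pairs of one-colored configurations with sources `f + g` and `g - f` (a strand is red
iff its two orientations differ). Reversing all orientations shows that the sources `h` and
`-h` are equally frequent, so with `A`, `B` the numbers of one-colored configurations with
sources `φ + ψ`, `φ - ψ` the three counts are `A²`, `B²` and `AB`, and the claim is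
`A² + B² ≥ 2AB`.
-/

lemma csrc_add (m n : V → V → ℕ) (x : V) :
    csrc (fun x y => m x y + n x y) x = csrc m x + csrc n x := by
  simp only [csrc, ← sum_add_distrib]
  push_cast
  exact sum_congr rfl fun _ _ => by ring

lemma csrc_transpose (n : V → V → ℕ) (x : V) :
    csrc (fun x y => n y x) x = -csrc n x := by
  simp only [csrc, ← sum_neg_distrib, neg_sub]

namespace Config

variable {G : MG V}

lemma ext_orient {ω ω' : Config G} (h : ω.orient = ω'.orient) : ω = ω' := by
  cases ω; cases ω'; cases h; rfl

lemma orient_swap_ne (ω : Config G) (s : G.Strand) : (ω.orient s).swap ≠ ω.orient s := by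
  intro h
  apply G.noloop s
  rw [← ω.compat s]
  exact Sym2.mk_isDiag_iff.2 (Prod.ext_iff.1 h).1.symm

lemma orient_eq_or_eq_swap (ω ω' : Config G) (s : G.Strand) :
    ω'.orient s = ω.orient s ∨ ω'.orient s = (ω.orient s).swap :=
  Sym2.mk_eq_mk_iff.1 ((ω'.compat s).trans (ω.compat s).symm)

def reverse (ω : Config G) : Config G :=
  ⟨fun s => (ω.orient s).swap, fun s => by
    rw [← ω.compat s]; simp [Function.uncurry, Sym2.eq_swap]⟩

lemma reverse_involutive : Function.Involutive (reverse (G := G)) :=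
  fun _ => ext_orient (by funext s; simp [reverse])

lemma csrc_reverse (ω : Config G) (x : V) : csrc ω.reverse.cur x = -csrc ω.cur x := by
  have h : ω.reverse.cur = fun x y => ω.cur y x := by
    funext a b
    simp only [cur, reverse, Prod.swap_eq_iff_eq_swap, Prod.swap_prod_mk]
  rw [h, csrc_transpose]

end Config

section Counting

variable {G : MG V}

def Config2.equivProd : Config2 G ≃ Config G × Config G where
  toFun := F
  invFun p := ⟨p.1.orient, fun s => decide (p.2.orient s ≠ p.1.orient s), p.1.compat⟩
  left_inv ω := by
    obtain ⟨o, r, c⟩ := ω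
    simp only [F]
    congr 1
    funext s
    cases r s <;> simp [Config.orient_swap_ne ⟨o, c⟩ s]
  right_inv p := by
    refine Prod.ext (Config.ext_orient rfl) (Config.ext_orient (funext fun s => ?_))
    rcases Config.orient_eq_or_eq_swap p.1 p.2 s with h | h
    · simp [F, h]
    · simp [F, h, Config.orient_swap_ne p.1 s]

lemma cur_fst_F (ω : Config2 G) (x y : V) :
    (F ω).1.cur x y = ω.redCur x y + ω.blueCur x y := by
  unfold F Config.cur Config2.redCur Config2.blueCur
  simp only [card_filter, ← sum_add_distrib]
  exact sum_congr rfl fun s _ => by cases ω.red s <;> simp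

lemma cur_snd_F (ω : Config2 G) (x y : V) :
    (F ω).2.cur x y = ω.blueCur x y + ω.redCur y x := by
  unfold F Config.cur Config2.redCur Config2.blueCur
  simp only [card_filter, ← sum_add_distrib]
  exact sum_congr rfl fun s _ => by cases ω.red s <;> simp [Prod.swap_eq_iff_eq_swap]

lemma csrc_fst_F (ω : Config2 G) (x : V) :
    csrc (F ω).1.cur x = csrc ω.redCur x + csrc ω.blueCur x := by
  rw [show (F ω).1.cur = _ from funext₂ (cur_fst_F ω), csrc_add]

lemma csrc_snd_F (ω : Config2 G) (x : V) :
    csrc (F ω).2.cur x = csrc ω.blueCur x - csrc ω.redCur x := by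
  rw [show (F ω).2.cur = _ from funext₂ (cur_snd_F ω), csrc_add ω.blueCur (fun x y => ω.redCur y x),
    csrc_transpose ω.redCur, sub_eq_add_neg]

variable (G) in
noncomputable def srcCount (f : V → ℤ) : ℕ :=
  Nat.card {ω : Config G // ∀ x, csrc ω.cur x = f x}

lemma srcCount_neg (f : V → ℤ) : srcCount G (fun x => -f x) = srcCount G f :=
  Nat.card_congr <| Config.reverse_involutive.toPerm.subtypeEquiv fun ω => by
    simp [Config.csrc_reverse, neg_eq_iff_eq_neg]

lemma card_config2_eq (f g : V → ℤ) :
    Nat.card {ω : Config2 G //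
        (∀ x, csrc ω.redCur x = f x) ∧ (∀ x, csrc ω.blueCur x = g x)} =
      srcCount G (fun x => f x + g x) * srcCount G (fun x => f x - g x) := by
  have hneg : srcCount G (fun x => f x - g x) = srcCount G (fun x => g x - f x) := by
    rw [← srcCount_neg]; simp only [neg_sub]
  rw [hneg, srcCount, srcCount, ← Nat.card_prod]
  refine Nat.card_congr <|
    (Config2.equivProd.subtypeEquiv fun ω => ?_).trans Equiv.subtypeProdEquivProd
  change _ ↔ (∀ x, csrc (F ω).1.cur x = _) ∧ (∀ x, csrc (F ω).2.cur x = _)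
  simp only [csrc_fst_F, csrc_snd_F]
  constructor
  · rintro ⟨hr, hb⟩
    exact ⟨fun x => by rw [hr, hb], fun x => by rw [hr, hb]⟩
  · rintro ⟨h₁, h₂⟩
    exact ⟨fun x => by linarith [h₁ x, h₂ x], fun x => by linarith [h₁ x, h₂ x]⟩

end Counting

theorem card_ineq_general (G : MG V) (φ ψ : V → ℤ) :
    Nat.card {ω : Config2 G //
        (∀ x, csrc ω.redCur x = φ x + ψ x) ∧ (∀ x, csrc ω.blueCur x = 0)} +
      Nat.card {ω : Config2 G //
        (∀ x, csrc ω.redCur x = φ x - ψ x) ∧ (∀ x, csrc ω.blueCur x = 0)} ≥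
      2 * Nat.card {ω : Config2 G //
        (∀ x, csrc ω.redCur x = φ x) ∧ (∀ x, csrc ω.blueCur x = ψ x)} := by
  rw [card_config2_eq, card_config2_eq, card_config2_eq (G := G) φ ψ]
  simp only [add_zero, sub_zero, ← sq, ← mul_assoc]
  exact two_mul_le_add_sq _ _

/-- The combinatorial form of Ginibre's inequality:
`#{∂r = φ+ψ, ∂b = 0}_N + #{∂r = φ−ψ, ∂b = 0}_N ≥ 2·#{∂r = φ, ∂b = ψ}_N`. -/
theorem card_ineq (G : MG V) (φ ψ : V → ℤ)
    (hφ : ∑ v, φ v = 0) (hψ : ∑ v, ψ v = 0) :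
    Nat.card {ω : Config2 G //
        (∀ x, csrc ω.redCur x = φ x + ψ x) ∧ (∀ x, csrc ω.blueCur x = 0)} +
      Nat.card {ω : Config2 G //
        (∀ x, csrc ω.redCur x = φ x - ψ x) ∧ (∀ x, csrc ω.blueCur x = 0)} ≥
      2 * Nat.card {ω : Config2 G //
        (∀ x, csrc ω.redCur x = φ x) ∧ (∀ x, csrc ω.blueCur x = ψ x)} :=
  card_ineq_general G φ ψ
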